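/- Set ρ = cos²θ, g_ρ(x₂) = F(x₂ tan θ)^ρ, let χ(t) = min(1, max(0, 2 − |t|)) be the piecewise-linear cutoff (so |χ'| ≤ 1 almost everywhere), and for n > 0 define I₂ = (1/n) ∫_ℝ χ(x₂/n) χ'(x₂/n) · ( 2 g_ρ(x₂) g_ρ'(x₂) F(x₂ tan θ) − g_ρ(x₂)² e^{-α|x₂| tan θ} cot θ ) dx₂. Then for every n > 0, |I₂| ≤ (72 cos²θ + 84 cos⁴θ) / ( 36 α^{2cos²θ+1} sin²θ · n ). -/

import Mathlib

/-!
With `g = F (x tan θ) ^ ρ` the chain rule gives `g' = ρ tan θ F ^ (ρ - 1) F'(x tan θ)`, so the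
bracket in `I₂` is `(2ρ tan θ - cot θ) F ^ (2ρ) F'` at `x tan θ`, and
`|2ρ tan θ - cot θ| = cot θ |2 sin² θ - 1| ≤ cot θ`. The cutoff is `1`-Lipschitz with values in
`[0, 1]`, hence `|I₂| ≤ (cot θ / n) ∫ F (x tan θ) ^ (2ρ) F' (x tan θ) dx`, and the substitution
`u = x tan θ` together with `∫ F ^ (2ρ) F' = (2/α) ^ (2ρ+1) / (2ρ+1)` makes this
`cot² θ (2/α) ^ (2ρ+1) / ((2ρ+1) n)`. Finally `2 ^ (2ρ+1) / (2ρ+1) ≤ 2 + 7ρ/3` because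
`4 ^ ρ ≤ 1 + 3ρ` on `[0, 1]` by convexity.
-/

open Real MeasureTheory Set Filter

/-- `F α t = ∫_{-∞}^t e^{-α|x|} dx`. -/
noncomputable def F (α t : ℝ) : ℝ := ∫ x in Iio t, exp (-α * |x|)

/-- The half-plane-like domain `Ω = {(x₁,x₂) : x₁ < x₂ tan θ}`. -/
def Omg (θ : ℝ) : Set (ℝ × ℝ) := {p | p.1 < p.2 * tan θ}

/-- The functional `R(g) = ∫ g'·(g'·F(x tanθ) − g·e^{-α|x|tanθ}·cot θ) dx`. -/
noncomputable def Rfun (α θ : ℝ) (g : ℝ → ℝ) : ℝ :=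
  ∫ x : ℝ, deriv g x *
    (deriv g x * F α (x * tan θ) - g x * exp (-α * |x| * tan θ) * cot θ)

/-- The quantity `Λ(θ)` from the upper bound for the lowest eigenvalue. -/
noncomputable def Lam (θ : ℝ) : ℝ :=
  3 * cos θ ^ 6 * ((2:ℝ) ^ (2 * cos θ ^ 2) - 1) ^ 2 /
    (2 * (1 + 2 * cos θ ^ 2) ^ 3 *
      (108 + 180 * cos θ ^ 2 - 132 * cos θ ^ 4 + 45 * cos θ ^ 6 - 5 * cos θ ^ 8))

open scoped Topology

section
variable {α : ℝ}

lemma integrable_exp_neg_mul_abs (hα : 0 < α) : Integrable fun x : ℝ => exp (-α * |x|) := by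
  rw [← integrableOn_univ, ← Iic_union_Ioi (a := 0)]
  refine .union ((integrableOn_exp_mul_Iic hα 0).congr_fun (fun x hx => ?_) measurableSet_Iic)
    ((integrableOn_exp_mul_Ioi (neg_neg_of_pos hα) 0).congr_fun (fun x hx => ?_) measurableSet_Ioi)
  · simp [abs_of_nonpos (mem_Iic.1 hx)]
  · rw [abs_of_pos hx]

lemma F_eq_setIntegral_Iic (α t : ℝ) : F α t = ∫ x in Iic t, exp (-α * |x|) :=
  setIntegral_congr_set Iio_ae_eq_Iic

lemma F_of_nonpos (hα : 0 < α) {t : ℝ} (ht : t ≤ 0) : F α t = exp (α * t) / α := by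
  rw [F_eq_setIntegral_Iic, ← integral_exp_mul_Iic hα]
  refine setIntegral_congr_fun measurableSet_Iic fun x hx => ?_
  simp [abs_of_nonpos (mem_Iic.1 hx |>.trans ht)]

lemma integral_exp_neg_mul_abs (hα : 0 < α) : ∫ x, exp (-α * |x|) = 2 / α := by
  rw [integral_comp_abs (f := fun x => exp (-α * x)), integral_exp_mul_Ioi (neg_neg_of_pos hα)]
  field_simp
  simp

lemma F_of_nonneg (hα : 0 < α) {t : ℝ} (ht : 0 ≤ t) : F α t = (2 - exp (-α * t)) / α := by
  have htail : ∫ x in Ici t, exp (-α * |x|) = exp (-α * t) / α := by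
    rw [integral_Ici_eq_integral_Ioi, ← neg_div_neg_eq,
      ← integral_exp_mul_Ioi (neg_neg_of_pos hα)]
    refine setIntegral_congr_fun measurableSet_Ioi fun x hx => ?_
    rw [abs_of_pos (ht.trans_lt hx)]
  rw [F, ← compl_Ici, setIntegral_compl measurableSet_Ici (integrable_exp_neg_mul_abs hα),
    integral_exp_neg_mul_abs hα, htail, sub_div]

lemma hasDerivAt_F (hα : 0 < α) (t : ℝ) : HasDerivAt (F α) (exp (-α * |t|)) t := by
  have hcont : Continuous fun x : ℝ => exp (-α * |x|) := by fun_prop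
  have hF : F α = fun u => F α 0 + ∫ x in (0 : ℝ)..u, exp (-α * |x|) := by
    ext u
    have hint := integrable_exp_neg_mul_abs hα
    rw [← intervalIntegral.integral_Iic_sub_Iic hint.integrableOn hint.integrableOn,
      F_eq_setIntegral_Iic, F_eq_setIntegral_Iic]
    ring
  rw [hF]
  exact ((hcont.integral_hasStrictDerivAt 0 t).hasDerivAt).const_add _

lemma continuous_F (hα : 0 < α) : Continuous (F α) :=
  continuous_iff_continuousAt.2 fun t => (hasDerivAt_F hα t).continuousAt

lemma F_pos (hα : 0 < α) (t : ℝ) : 0 < F α t := by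
  rcases le_total t 0 with ht | ht
  · rw [F_of_nonpos hα ht]; positivity
  · rw [F_of_nonneg hα ht]
    have : exp (-α * t) ≤ 1 := exp_le_one_iff.2 (by nlinarith)
    exact div_pos (by linarith) hα

lemma F_le (hα : 0 < α) (t : ℝ) : F α t ≤ 2 / α := by
  rcases le_total t 0 with ht | ht
  · rw [F_of_nonpos hα ht]
    have : exp (α * t) ≤ 1 := exp_le_one_iff.2 (by nlinarith)
    gcongr; linarith
  · rw [F_of_nonneg hα ht]
    gcongr; linarith [exp_pos (-α * t)]

lemma tendsto_F_atBot (hα : 0 < α) : Tendsto (F α) atBot (𝓝 0) := by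
  have h : Tendsto (fun t => exp (α * t) / α) atBot (𝓝 0) := by
    simpa using (tendsto_exp_atBot.comp (tendsto_id.const_mul_atBot hα)).div_const α
  exact h.congr' (eventually_le_atBot 0 |>.mono fun t ht => (F_of_nonpos hα ht).symm)

lemma tendsto_F_atTop (hα : 0 < α) : Tendsto (F α) atTop (𝓝 (2 / α)) := by
  have h : Tendsto (fun t => (2 - exp (-α * t)) / α) atTop (𝓝 ((2 - 0) / α)) :=
    ((tendsto_exp_atBot.comp (tendsto_id.const_mul_atTop_of_neg (neg_neg_of_pos hα))).const_sub
      2).div_const α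
  rw [sub_zero] at h
  exact h.congr' (eventually_ge_atTop 0 |>.mono fun t ht => (F_of_nonneg hα ht).symm)

lemma integrable_F_rpow_mul_exp (hα : 0 < α) {p : ℝ} (hp : 0 ≤ p) :
    Integrable fun u => F α u ^ p * exp (-α * |u|) := by
  refine ((integrable_exp_neg_mul_abs hα).const_mul ((2 / α) ^ p)).mono' ?_
    (Eventually.of_forall fun u => ?_)
  · exact (((continuous_F hα).rpow_const fun _ => Or.inr hp).mul
      (by fun_prop)).aestronglyMeasurable
  · rw [norm_of_nonneg (by have := F_pos hα u; positivity)]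
    gcongr
    exacts [(F_pos hα u).le, F_le hα u]

/-- The integrand is the derivative of `F ^ (p + 1) / (p + 1)`. -/
lemma integral_F_rpow_mul_exp (hα : 0 < α) {p : ℝ} (hp : 0 ≤ p) :
    ∫ u, F α u ^ p * exp (-α * |u|) = (2 / α) ^ (p + 1) / (p + 1) := by
  have hp1 : 0 < p + 1 := by linarith
  have hderiv : ∀ u, HasDerivAt (fun u => F α u ^ (p + 1) / (p + 1))
      (F α u ^ p * exp (-α * |u|)) u := fun u => by
    refine (((hasDerivAt_F hα u).rpow_const (p := p + 1) (Or.inl (F_pos hα u).ne')).div_const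
      (p + 1)).congr_deriv ?_
    rw [add_sub_cancel_right]
    field_simp
  have hlim : ∀ {l : Filter ℝ} {a : ℝ}, Tendsto (F α) l (𝓝 a) →
      Tendsto (fun u => F α u ^ (p + 1) / (p + 1)) l (𝓝 (a ^ (p + 1) / (p + 1))) :=
    fun h => (h.rpow_const (Or.inr hp1.le)).div_const _
  rw [integral_of_hasDerivAt_of_tendsto hderiv (integrable_F_rpow_mul_exp hα hp)
    (hlim (tendsto_F_atBot hα)) (hlim (tendsto_F_atTop hα)), zero_rpow hp1.ne', zero_div, sub_zero]

lemma integral_F_comp_mul_rpow_mul_exp (hα : 0 < α) {p k : ℝ} (hp : 0 ≤ p) (hk : 0 < k) :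
    ∫ x, F α (x * k) ^ p * exp (-α * |x * k|) = k⁻¹ * ((2 / α) ^ (p + 1) / (p + 1)) := by
  rw [Measure.integral_comp_mul_right (fun u => F α u ^ p * exp (-α * |u|)),
    integral_F_rpow_mul_exp hα hp, abs_of_pos (inv_pos.2 hk), smul_eq_mul]

lemma deriv_F_comp_mul_rpow (hα : 0 < α) (p k x : ℝ) :
    deriv (fun y => F α (y * k) ^ p) x
      = exp (-α * |x * k|) * k * p * F α (x * k) ^ (p - 1) :=
  (((hasDerivAt_F hα (x * k)).comp x (hasDerivAt_mul_const k)).rpow_const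
    (Or.inl (F_pos hα (x * k)).ne')).deriv

lemma two_mul_F_rpow_mul_deriv_mul_F_sub_eq (hα : 0 < α) {k : ℝ} (hk : 0 ≤ k) (p d x : ℝ) :
    2 * F α (x * k) ^ p * deriv (fun y => F α (y * k) ^ p) x * F α (x * k)
        - (F α (x * k) ^ p) ^ 2 * exp (-α * |x| * k) * d
      = (2 * p * k - d) * (F α (x * k) ^ (2 * p) * exp (-α * |x * k|)) := by
  have hF := F_pos hα (x * k)
  have hprod : F α (x * k) ^ p * F α (x * k) ^ (p - 1) * F α (x * k) = F α (x * k) ^ (2 * p) := by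
    rw [← rpow_add hF, ← rpow_add_one hF.ne']
    ring_nf
  have hsq : (F α (x * k) ^ p) ^ 2 = F α (x * k) ^ (2 * p) := by
    rw [← rpow_natCast, ← rpow_mul hF.le]
    congr 1
    push_cast
    ring
  have hexp : exp (-α * |x * k|) = exp (-α * |x| * k) := by
    rw [abs_mul, abs_of_nonneg hk, mul_assoc]
  rw [deriv_F_comp_mul_rpow hα, hexp, hsq, ← hprod]
  ring

end

lemma lipschitzWith_cutoff : LipschitzWith 1 fun t : ℝ => min 1 (max 0 (2 - |t|)) := by
  refine (LipschitzWith.const_max ?_ 0).const_min 1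
  refine LipschitzWith.of_dist_le_mul fun x y => ?_
  rw [NNReal.coe_one, one_mul, dist_eq, dist_eq, sub_sub_sub_cancel_left, abs_sub_comm]
  exact abs_abs_sub_abs_le _ _

lemma abs_cutoff_le_one (t : ℝ) : |min 1 (max 0 (2 - |t|))| ≤ 1 :=
  abs_le.2 ⟨by linarith [le_min zero_le_one (le_max_left 0 (2 - |t|))], min_le_left _ _⟩

/-- This holds also at the kinks `|t| = 1, 2`, where `deriv` is `0` by convention. -/
lemma abs_deriv_cutoff_le_one (t : ℝ) : |deriv (fun t : ℝ => min 1 (max 0 (2 - |t|))) t| ≤ 1 := by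
  simpa using norm_deriv_le_of_lipschitz (x₀ := t) lipschitzWith_cutoff

lemma rpow_le_one_sub_add_mul {b s : ℝ} (hb : 0 ≤ b) (hs₀ : 0 ≤ s) (hs₁ : s ≤ 1) :
    b ^ s ≤ 1 - s + s * b := by
  simpa using geom_mean_le_arith_mean2_weighted (sub_nonneg.2 hs₁) hs₀ zero_le_one hb (by ring)

lemma two_rpow_two_mul_add_one_div_le {s : ℝ} (hs₀ : 0 ≤ s) (hs₁ : s ≤ 1) :
    (2 : ℝ) ^ (2 * s + 1) / (2 * s + 1) ≤ 2 + 7 / 3 * s := by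
  have h4 : (2 : ℝ) ^ (2 * s + 1) = 2 * 4 ^ s := by
    rw [rpow_add_one two_ne_zero, rpow_mul zero_le_two]
    norm_num [mul_comm]
  have := rpow_le_one_sub_add_mul (b := 4) (by norm_num) hs₀ hs₁
  rw [h4, div_le_iff₀ (by positivity)]
  nlinarith

lemma abs_two_mul_cos_sq_mul_tan_sub_cot_le {θ : ℝ} (hθ : θ ∈ Ioo 0 (π / 2)) :
    |2 * cos θ ^ 2 * tan θ - cot θ| ≤ cot θ := by
  have hcos : 0 < cos θ := cos_pos_of_mem_Ioo ⟨by linarith [hθ.1, pi_pos], hθ.2⟩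
  have hsin : 0 < sin θ := sin_pos_of_pos_of_lt_pi hθ.1 (by linarith [hθ.2, pi_pos])
  have hcot : 0 < cot θ := by rw [cot_eq_cos_div_sin]; positivity
  have h : 2 * cos θ ^ 2 * tan θ - cot θ = cot θ * (2 * sin θ ^ 2 - 1) := by
    rw [tan_eq_sin_div_cos, cot_eq_cos_div_sin]
    field_simp
  rw [h, abs_mul, abs_of_pos hcot]
  refine mul_le_of_le_one_right hcot.le (abs_le.2 ⟨?_, ?_⟩) <;>
    nlinarith [sin_sq_add_cos_sq θ, sq_nonneg (cos θ), sq_nonneg (sin θ)]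

lemma I2_majorant_le {α θ n : ℝ} (hα : 0 < α) (hθ : θ ∈ Ioo 0 (π / 2)) (hn : 0 < n) :
    1 / n * (|2 * cos θ ^ 2 * tan θ - cot θ|
        * ((tan θ)⁻¹ * ((2 / α) ^ (2 * cos θ ^ 2 + 1) / (2 * cos θ ^ 2 + 1))))
      ≤ (72 * cos θ ^ 2 + 84 * cos θ ^ 4) / (36 * α ^ (2 * cos θ ^ 2 + 1) * sin θ ^ 2 * n) := by
  have hsin : 0 < sin θ := sin_pos_of_pos_of_lt_pi hθ.1 (by linarith [hθ.2, pi_pos])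
  have hcot : |2 * cos θ ^ 2 * tan θ - cot θ| * (tan θ)⁻¹ ≤ cos θ ^ 2 / sin θ ^ 2 := by
    have hinv : (tan θ)⁻¹ = cot θ := by rw [tan_eq_sin_div_cos, inv_div, cot_eq_cos_div_sin]
    have hcot_nonneg : 0 ≤ cot θ :=
      hinv ▸ inv_nonneg.2 (tan_pos_of_pos_of_lt_pi_div_two hθ.1 hθ.2).le
    calc _ ≤ cot θ * cot θ := by
          rw [hinv]
          gcongr
          exact abs_two_mul_cos_sq_mul_tan_sub_cot_le hθ
      _ = cos θ ^ 2 / sin θ ^ 2 := by rw [cot_eq_cos_div_sin]; ring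
  have hs₀ : 0 ≤ cos θ ^ 2 := sq_nonneg _
  have hs₁ : cos θ ^ 2 ≤ 1 := by nlinarith [sin_sq_add_cos_sq θ, sq_nonneg (sin θ)]
  have hK : (2 / α) ^ (2 * cos θ ^ 2 + 1) / (2 * cos θ ^ 2 + 1)
      ≤ (2 + 7 / 3 * cos θ ^ 2) / α ^ (2 * cos θ ^ 2 + 1) := by
    rw [div_rpow zero_le_two hα.le, div_right_comm]
    gcongr
    exact two_rpow_two_mul_add_one_div_le hs₀ hs₁
  calc _ = 1 / n * ((|2 * cos θ ^ 2 * tan θ - cot θ| * (tan θ)⁻¹)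
          * ((2 / α) ^ (2 * cos θ ^ 2 + 1) / (2 * cos θ ^ 2 + 1))) := by ring
    _ ≤ 1 / n * (cos θ ^ 2 / sin θ ^ 2 * ((2 + 7 / 3 * cos θ ^ 2) / α ^ (2 * cos θ ^ 2 + 1))) := by
      gcongr
    _ = _ := by
      field_simp
      ring

/-- bound on the error term `I₂` for `ρ = cos²θ` and the
piecewise-linear cutoff `χ(t) = min(1, max(0, 2 − |t|))`. -/
theorem I2_bound (α θ : ℝ) (hα : 0 < α) (hθ : θ ∈ Ioo 0 (π/2))
    (n : ℝ) (hn : 0 < n) :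
    ∀ χ : ℝ → ℝ, χ = (fun t => min 1 (max 0 (2 - |t|))) →
      |(1 / n) * ∫ x : ℝ, χ (x / n) * deriv χ (x / n) *
          (2 * F α (x * tan θ) ^ (cos θ ^ 2)
              * deriv (fun y => F α (y * tan θ) ^ (cos θ ^ 2)) x * F α (x * tan θ)
            - (F α (x * tan θ) ^ (cos θ ^ 2)) ^ 2 * exp (-α * |x| * tan θ) * cot θ)|
        ≤ (72 * cos θ ^ 2 + 84 * cos θ ^ 4)
            / (36 * α ^ (2 * cos θ ^ 2 + 1) * sin θ ^ 2 * n) := by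
  intro χ hχ
  have hχ_le : ∀ t, |χ t| ≤ 1 := hχ ▸ abs_cutoff_le_one
  have hχ'_le : ∀ t, |deriv χ t| ≤ 1 := hχ ▸ abs_deriv_cutoff_le_one
  have htan : 0 < tan θ := tan_pos_of_pos_of_lt_pi_div_two hθ.1 hθ.2
  have hp : 0 ≤ 2 * cos θ ^ 2 := by positivity
  simp_rw [two_mul_F_rpow_mul_deriv_mul_F_sub_eq hα htan.le]
  set c := 2 * cos θ ^ 2 * tan θ - cot θ
  set G := fun x => F α (x * tan θ) ^ (2 * cos θ ^ 2) * exp (-α * |x * tan θ|)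
  have hG_int : Integrable G := (integrable_F_rpow_mul_exp hα hp).comp_mul_right' htan.ne'
  have hbound : ∀ x, ‖χ (x / n) * deriv χ (x / n) * (c * G x)‖ ≤ |c| * G x := fun x => by
    have hGx : 0 ≤ G x := by have := F_pos hα (x * tan θ); positivity
    calc _ = |χ (x / n)| * |deriv χ (x / n)| * (|c| * G x) := by
          simp only [norm_mul, Real.norm_eq_abs, abs_of_nonneg hGx]
      _ ≤ 1 * 1 * (|c| * G x) := by gcongr <;> simp only [hχ_le, hχ'_le]
      _ = |c| * G x := by ring
  calc _ = 1 / n * ‖∫ x, χ (x / n) * deriv χ (x / n) * (c * G x)‖ := by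
        rw [abs_mul, abs_of_pos (by positivity)]; rfl
    _ ≤ 1 / n * ∫ x, |c| * G x := by
      gcongr
      exact norm_integral_le_of_norm_le (hG_int.const_mul _) (ae_of_all _ hbound)
    _ = 1 / n * (|c| * ((tan θ)⁻¹ * ((2 / α) ^ (2 * cos θ ^ 2 + 1) / (2 * cos θ ^ 2 + 1)))) := by
      rw [integral_const_mul, integral_F_comp_mul_rpow_mul_exp hα hp htan]
    _ ≤ _ := I2_majorant_le hα hθ hn
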